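/- arXiv:1809.06692 — 5 statements merged into one kernel-verified Lean document; each statement's English description precedes it below -/
import Mathlib

section
/- Let H be a finite simple graph and let v and w be two distinct vertices of H. A nonempty set E of edges of H is the edge set of a path from v to w if and only if E is minimal (with respect to inclusion) among the sets of edges of H such that, in the subgraph of H formed by the edges of E, the vertices of odd degree are exactly v and w. -/
/-!
The edges of a path from `v` to `w` have odd degree exactly at `v` and `w`. If `E'` is a subset
of them with the same odd vertices, then all degrees in the complement are even; but in a nonempty
set of edges of a path, the edge nearest to `v` is the only one at its first endpoint, so the
complement is empty. Conversely, the handshake lemma in the component of `v` of the graph formed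
by `E` gives an odd vertex other than `v` reachable from `v`, which must be `w`; hence `E` contains
the edges of a path from `v` to `w`, and by minimality equals them.
-/

open Finset

theorem Finset.even_card_filter_sdiff {α : Type*} [DecidableEq α] {s t : Finset α} (hts : t ⊆ s)
    (p : α → Prop) [DecidablePred p] (h : Odd #{a ∈ t | p a} ↔ Odd #{a ∈ s | p a}) :
    Even #{a ∈ s \ t | p a} := by
  have hsub : {a ∈ t | p a} ⊆ {a ∈ s | p a} := filter_subset_filter p hts
  have hsdiff : {a ∈ s \ t | p a} = {a ∈ s | p a} \ {a ∈ t | p a} := by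
    ext; simp only [mem_filter, mem_sdiff]; tauto
  rw [hsdiff, card_sdiff_of_subset hsub, Nat.even_sub (card_le_card hsub)]
  simp only [← Nat.not_odd_iff_even]
  tauto

namespace SimpleGraph

variable {V : Type*} {G : SimpleGraph V}

theorem exists_ne_reachable_odd_degree [Fintype V] [DecidableRel G.Adj] {v : V}
    (hv : Odd (G.degree v)) : ∃ w, w ≠ v ∧ G.Reachable v w ∧ Odd (G.degree w) := by
  classical
  let s : Set V := {x | G.Reachable v x}
  have hdeg (x : s) : (G.induce s).degree x = G.degree x :=
    degree_induce_of_neighborSet_subset fun _ hy =>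
      x.2.trans (G.mem_neighborSet _ _ |>.mp hy).reachable
  obtain ⟨w, hwv, hw⟩ :=
    (G.induce s).exists_ne_odd_degree_of_exists_odd_degree ⟨v, Reachable.refl v⟩ (by rwa [hdeg])
  exact ⟨w, fun h => hwv (Subtype.ext h), w.2, by rwa [← hdeg]⟩

theorem degree_fromEdgeSet [DecidableEq V] [Fintype V] {E : Finset (Sym2 V)}
    (hE : ∀ e ∈ E, ¬ e.IsDiag) (x : V) :
    (fromEdgeSet (E : Set (Sym2 V))).degree x = #{e ∈ E | x ∈ e} := by
  rw [← card_incidenceFinset_eq_degree, incidenceFinset_eq_filter]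
  congr 2
  ext e
  simp only [mem_edgeFinset, edgeSet_fromEdgeSet, Set.mem_sdiff, mem_coe]
  exact ⟨fun h => h.1, fun h => ⟨h, hE e h⟩⟩

namespace Walk

variable [DecidableEq V] {u w : V}

theorem IsTrail.odd_card_filter_mem_iff {p : G.Walk u w} (hp : p.IsTrail) (huw : u ≠ w) (x : V) :
    Odd #{e ∈ p.edges.toFinset | x ∈ e} ↔ x = u ∨ x = w := by
  have hfilter : {e ∈ p.edges.toFinset | x ∈ e} = (p.edges.filter (x ∈ ·)).toFinset := by
    ext; simp
  rw [hfilter, List.toFinset_card_of_nodup (hp.edges_nodup.filter _),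
    ← List.countP_eq_length_filter, ← Nat.not_even_iff_odd, hp.even_countP_edges_iff x]
  tauto

theorem IsPath.eq_empty_of_even_card_filter_mem {p : G.Walk u w} (hp : p.IsPath)
    {D : Finset (Sym2 V)} (hD : D ⊆ p.edges.toFinset) (heven : ∀ x, Even #{e ∈ D | x ∈ e}) :
    D = ∅ := by
  induction p with
  | nil => simpa using hD
  | @cons a b c h q ih =>
    rw [cons_isPath_iff] at hp
    have hmem : ∀ e ∈ D, e ∈ q.edges.toFinset ∨ e = s(a, b) := by
      intro e he
      simpa [or_comm] using hD he
    -- `a` lies on no edge of `q`, so `s(a, b)` would be the only edge of `D` at `a`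
    have hab : s(a, b) ∉ D := by
      intro hin
      have hfilter : {e ∈ D | a ∈ e} = {s(a, b)} := by
        ext e
        simp only [mem_filter, mem_singleton]
        refine ⟨fun ⟨he, hae⟩ => ?_, by rintro rfl; exact ⟨hin, Sym2.mem_mk_left a b⟩⟩
        refine (hmem e he).resolve_left fun hq => hp.2 ?_
        exact mem_support_of_mem_edges (List.mem_toFinset.mp hq) hae
      simpa [hfilter] using heven a
    exact ih hp.1 fun e he => (hmem e he).resolve_right fun h => hab (h ▸ he)

theorem IsPath.eq_edges_toFinset_of_odd_card_filter_mem_iff {p : G.Walk u w} (hp : p.IsPath)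
    {E : Finset (Sym2 V)} (hE : E ⊆ p.edges.toFinset)
    (hpar : ∀ x, Odd #{e ∈ E | x ∈ e} ↔ Odd #{e ∈ p.edges.toFinset | x ∈ e}) :
    E = p.edges.toFinset := by
  have hcompl : p.edges.toFinset \ E = ∅ :=
    hp.eq_empty_of_even_card_filter_mem sdiff_subset fun x => even_card_filter_sdiff hE _ (hpar x)
  exact hE.antisymm (sdiff_eq_empty_iff_subset.mp hcompl)

end Walk

theorem exists_isPath_edges_toFinset_subset [Fintype V] [DecidableEq V] [DecidableRel G.Adj]
    {E : Finset (Sym2 V)} (hE : E ⊆ G.edgeFinset) {v w : V} (hv : Odd #{e ∈ E | v ∈ e})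
    (hodd : ∀ x, Odd #{e ∈ E | x ∈ e} → x = v ∨ x = w) :
    ∃ p : G.Walk v w, p.IsPath ∧ p.edges.toFinset ⊆ E := by
  have hdiag : ∀ e ∈ E, ¬ e.IsDiag := fun e he =>
    G.not_isDiag_of_mem_edgeSet (mem_edgeFinset.mp (hE he))
  set F := fromEdgeSet (E : Set (Sym2 V))
  have hFG : F ≤ G := G.fromEdgeSet_le.mpr fun e he => mem_edgeFinset.mp (hE he.1)
  obtain ⟨w', hw'v, ⟨q⟩, hw'⟩ := exists_ne_reachable_odd_degree (G := F) (v := v)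
    (by rwa [degree_fromEdgeSet hdiag])
  obtain rfl : w' = w := (hodd w' (by rwa [← degree_fromEdgeSet hdiag])).resolve_left hw'v
  refine ⟨q.bypass.mapLe hFG, q.bypass_isPath.mapLe hFG, fun e he => ?_⟩
  rw [List.mem_toFinset, Walk.edges_mapLe_eq_edges] at he
  have heF := q.bypass.edges_subset_edgeSet he
  rw [edgeSet_fromEdgeSet] at heF
  exact heF.1

end SimpleGraph

theorem stmt_0_general {V : Type*} [Fintype V] [DecidableEq V]
    (H : SimpleGraph V) [DecidableRel H.Adj]
    (v w : V) (hvw : v ≠ w)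
    (E : Finset (Sym2 V)) (hE : E ⊆ H.edgeFinset) :
    (∃ p : H.Walk v w, p.IsPath ∧ p.edges.toFinset = E) ↔
      ((∀ x : V, Odd (E.filter (fun e => x ∈ e)).card ↔ (x = v ∨ x = w)) ∧
        ∀ E' ⊆ E,
          (∀ x : V, Odd (E'.filter (fun e => x ∈ e)).card ↔ (x = v ∨ x = w)) →
          E' = E) := by
  constructor
  · rintro ⟨p, hp, rfl⟩
    have hpar := hp.isTrail.odd_card_filter_mem_iff hvw
    exact ⟨hpar, fun E' hE' hpar' =>
      hp.eq_edges_toFinset_of_odd_card_filter_mem_iff hE' fun x => (hpar' x).trans (hpar x).symm⟩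
  · rintro ⟨hpar, hmin⟩
    obtain ⟨p, hp, hpE⟩ :=
      H.exists_isPath_edges_toFinset_subset hE ((hpar v).2 (Or.inl rfl)) fun x => (hpar x).1
    exact ⟨p, hp, hmin _ hpE (hp.isTrail.odd_card_filter_mem_iff hvw)⟩

/-- For a finite simple graph `H` and distinct vertices `v ≠ w`,
a nonempty set `E` of edges of `H` is the edge set of a path from `v` to `w`
iff `E` is minimal (w.r.t. inclusion) among sets of edges of `H` whose
odd-degree vertices are exactly `v` and `w`. -/
theorem stmt_0 {V : Type*} [Fintype V] [DecidableEq V]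
    (H : SimpleGraph V) [DecidableRel H.Adj]
    (v w : V) (hvw : v ≠ w)
    (E : Finset (Sym2 V)) (hE : E ⊆ H.edgeFinset) (hne : E.Nonempty) :
    (∃ p : H.Walk v w, p.IsPath ∧ p.edges.toFinset = E) ↔
      ((∀ x : V, Odd (E.filter (fun e => x ∈ e)).card ↔ (x = v ∨ x = w)) ∧
        ∀ E' ⊆ E,
          (∀ x : V, Odd (E'.filter (fun e => x ∈ e)).card ↔ (x = v ∨ x = w)) →
          E' = E) :=
  stmt_0_general H v w hvw E hE
end

section
/- Let G be a finite bipartite simple graph equipped with a weight function assigning to each edge the weight +1 or −1, and suppose that every cycle of G has strictly positive total weight. Let v and w be distinct vertices of G joined by a path Q of length d ≥ 1 all of whose edges have weight +1. Then every path from v to w in G has total weight at least 2 − d. -/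
/-!
For any path `Q` from `v` to `w` whose edges all have positive weight, `w(P) + w(Q) > 0`, by
induction on the length of `Q`: if `P` meets `Q` in an interior vertex `u`, split both paths at
`u` and add up the two shorter instances; otherwise `P` followed by `Q` reversed is a cycle (or
`P = Q` is a single edge). Here `w(Q) = d`. Since `G` is bipartite, `P` and `Q` have lengths of
the same parity, and a path of `±1` edges has weight congruent to its length mod 2; hence
`w(P) + d` is even and positive, i.e. at least `2`.
-/

namespace SimpleGraph.Walk

variable {V : Type*} {G : SimpleGraph V} (wt : Sym2 V → ℤ)

def weight {u v : V} (p : G.Walk u v) : ℤ := (p.edges.map wt).sum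

variable {wt} {u v w : V}

@[simp]
lemma weight_append (p : G.Walk u v) (q : G.Walk v w) :
    (p.append q).weight wt = p.weight wt + q.weight wt := by
  simp [weight]

@[simp]
lemma weight_reverse (p : G.Walk u v) : p.reverse.weight wt = p.weight wt := by
  simp [weight, List.sum_reverse]

lemma weight_takeUntil_add_weight_dropUntil [DecidableEq V] (p : G.Walk u v)
    (h : w ∈ p.support) :
    (p.takeUntil w h).weight wt + (p.dropUntil w h).weight wt = p.weight wt := by
  rw [← weight_append, take_spec]

lemma IsTrail.weight_eq_sum_toFinset [DecidableEq V] {p : G.Walk u v} (hp : p.IsTrail) :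
    p.weight wt = ∑ e ∈ p.edges.toFinset, wt e :=
  (List.sum_toFinset wt hp.edges_nodup).symm

lemma weight_eq_length (p : G.Walk u v) (h : ∀ e ∈ p.edges, wt e = 1) :
    p.weight wt = p.length := by
  rw [weight, List.map_congr_left h, List.map_const', List.sum_replicate, length_edges,
    nsmul_one]

lemma weight_pos (p : G.Walk u v) (hp : p.length ≠ 0) (h : ∀ e ∈ p.edges, 0 < wt e) :
    0 < p.weight wt :=
  List.sum_pos _ (by simpa using h) (by simpa [← List.length_eq_zero_iff] using hp)

lemma weight_modEq_length (p : G.Walk u v) (h : ∀ e ∈ p.edges, wt e = 1 ∨ wt e = -1) :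
    p.weight wt ≡ p.length [ZMOD 2] := by
  induction p with
  | nil => rfl
  | cons hadj p ih =>
    simp only [weight, edges_cons, List.map_cons, List.sum_cons, length_cons] at h ih ⊢
    have ih := ih fun e he => h e (List.mem_cons_of_mem _ he)
    rw [Int.ModEq] at ih ⊢
    rcases h _ List.mem_cons_self with h1 | h1 <;> rw [h1] <;> omega

lemma IsPath.isCycle_append_reverse {P Q : G.Walk u v} (hP : P.IsPath) (hQ : Q.IsPath)
    (hmeet : ∀ x ∈ P.support, x ∈ Q.support → x ≠ u → x = v)
    (hlen : 1 < P.length ∨ 1 < Q.length) :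
    (P.append Q.reverse).IsCycle := by
  refine hP.isCycle_append ((isPath_reverse_iff Q).mpr hQ) (fun x hxP hxQ => ?_)
    (by rwa [length_reverse])
  -- `x` would have to be `v` by `hmeet`, since `u` is not in the tail of `P`'s support;
  -- but `v` is not in the tail of `Q.reverse`'s support.
  grind [dropLast_support_concat, IsPath.support_nodup, support_reverse, cons_tail_support]

theorem IsPath.weight_add_weight_pos
    (hcyc : ∀ (x : V) (c : G.Walk x x), c.IsCycle → 0 < c.weight wt) (huv : u ≠ v)
    {P Q : G.Walk u v} (hP : P.IsPath) (hQ : Q.IsPath) (hQpos : ∀ e ∈ Q.edges, 0 < wt e) :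
    0 < P.weight wt + Q.weight wt := by
  classical
  induction hd : Q.length using Nat.strong_induction_on generalizing u v with
  | _ d ih =>
  by_cases! hmeet : ∃ x ∈ P.support, x ∈ Q.support ∧ x ≠ u ∧ x ≠ v
  · obtain ⟨x, hxP, hxQ, hxu, hxv⟩ := hmeet
    have h₁ := ih _ (hd ▸ length_takeUntil_lt_length hxQ hxv) hxu.symm
      (hP.takeUntil hxP) (hQ.takeUntil hxQ)
      (fun e he => hQpos e (Q.edges_takeUntil_subset_edges hxQ he)) rfl
    have h₂ := ih _ (hd ▸ length_dropUntil_lt_length hxQ hxu) hxv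
      (hP.dropUntil hxP) (hQ.dropUntil hxQ)
      (fun e he => hQpos e (Q.edges_dropUntil_subset_edges hxQ he)) rfl
    rw [← P.weight_takeUntil_add_weight_dropUntil hxP,
      ← Q.weight_takeUntil_add_weight_dropUntil hxQ]
    linarith
  by_cases hshort : P.length ≤ 1 ∧ Q.length ≤ 1
  · obtain rfl : P = Q := eq_of_length_le_one hshort.1 hshort.2
    have := P.weight_pos (fun h => huv (eq_of_length_eq_zero h)) hQpos
    linarith
  · have hcycle := hP.isCycle_append_reverse hQ hmeet (by omega)
    simpa using hcyc u _ hcycle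

end SimpleGraph.Walk

open SimpleGraph Walk in
theorem stmt_3_general {V : Type*} [DecidableEq V]
    (G : SimpleGraph V)
    (hbip : G.Colorable 2)
    (wt : Sym2 V → ℤ) (hwt : ∀ e ∈ G.edgeSet, wt e = 1 ∨ wt e = -1)
    (hcyc : ∀ (x : V) (c : G.Walk x x), c.IsCycle →
      0 < ∑ e ∈ c.edges.toFinset, wt e)
    (v w : V) (hvw : v ≠ w) (d : ℕ)
    (Q : G.Walk v w) (hQpath : Q.IsPath) (hQlen : Q.length = d)
    (hQpos : ∀ e ∈ Q.edges, wt e = 1)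
    (P : G.Walk v w) (hPpath : P.IsPath) :
    (2 : ℤ) - d ≤ ∑ e ∈ P.edges.toFinset, wt e := by
  rw [← hPpath.isTrail.weight_eq_sum_toFinset]
  have hQd : Q.weight wt = d := by rw [Q.weight_eq_length hQpos, hQlen]
  have hpos : 0 < P.weight wt + d := hQd ▸ hPpath.weight_add_weight_pos
    (fun x c hc => hc.isTrail.weight_eq_sum_toFinset ▸ hcyc x c hc) hvw hQpath
    (fun e he => by simp [hQpos e he])
  have hparity : P.weight wt ≡ P.length [ZMOD 2] :=
    P.weight_modEq_length fun e he => hwt e (P.edges_subset_edgeSet he)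
  obtain ⟨m, hm⟩ : Even (P.append Q.reverse).length :=
    two_colorable_iff_forall_loop_even.mp hbip v _
  rw [length_append, length_reverse, hQlen] at hm
  rw [Int.ModEq] at hparity
  omega

/-- In a finite bipartite simple graph with ±1 edge weights in which
every cycle has strictly positive total weight, if `Q` is a path from `v` to `w`
of length `d ≥ 1` all of whose edges have weight `+1`, then every path from `v`
to `w` has total weight at least `2 - d`. -/
theorem stmt_3 {V : Type*} [Fintype V] [DecidableEq V]
    (G : SimpleGraph V) [DecidableRel G.Adj]
    (hbip : G.Colorable 2)
    (wt : Sym2 V → ℤ) (hwt : ∀ e ∈ G.edgeSet, wt e = 1 ∨ wt e = -1)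
    (hcyc : ∀ (x : V) (c : G.Walk x x), c.IsCycle →
      0 < ∑ e ∈ c.edges.toFinset, wt e)
    (v w : V) (hvw : v ≠ w) (d : ℕ) (hd : 1 ≤ d)
    (Q : G.Walk v w) (hQpath : Q.IsPath) (hQlen : Q.length = d)
    (hQpos : ∀ e ∈ Q.edges, wt e = 1)
    (P : G.Walk v w) (hPpath : P.IsPath) :
    (2 : ℤ) - d ≤ ∑ e ∈ P.edges.toFinset, wt e :=
  stmt_3_general G hbip wt hwt hcyc v w hvw d Q hQpath hQlen hQpos P hPpath
end

section
/- Let G be a finite bipartite simple graph equipped with a weight function assigning to each edge the weight +1 or −1, and suppose that every cycle of G has strictly positive total weight. Let H be a subgraph of G (given by a set of edges of G) in which the vertices of odd degree are exactly two distinct vertices v and w. Then there exists a path from v to w all of whose edges lie in H and whose total weight is at most the total weight of the edge set of H. -/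
open Finset

private lemma card_filter_erase' {α : Type*} [DecidableEq α] {E : Finset α} {e : α}
    (he : e ∈ E) (P : α → Prop) [DecidablePred P] :
    (E.filter P).card = ((E.erase e).filter P).card + (if P e then 1 else 0) := by
  conv_lhs => rw [← Finset.insert_erase he]
  rw [Finset.filter_insert]
  split
  · rw [Finset.card_insert_of_notMem (by simp [Finset.mem_filter])]
  · simp

private lemma card_filter_sdiff' {α : Type*} [DecidableEq α] {E S : Finset α}
    (hS : S ⊆ E) (P : α → Prop) [DecidablePred P] :
    (E.filter P).card = ((E \ S).filter P).card + (S.filter P).card := by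
  rw [← Finset.card_union_of_disjoint
      (Finset.disjoint_filter_filter Finset.sdiff_disjoint),
    ← Finset.filter_union, Finset.sdiff_union_of_subset hS]

private lemma walk_parity {V : Type*} [DecidableEq V] {G : SimpleGraph V} {a b : V}
    (p : G.Walk a b) (x : V) :
    Even ((p.edges.filter (fun e => x ∈ e)).length) ↔ (x = a ↔ x = b) := by
  induction p with
  | nil => simp
  | @cons u c d h q ih =>
    have hne : u ≠ c := h.ne
    rw [SimpleGraph.Walk.edges_cons, List.filter_cons]
    by_cases hx : x ∈ (s(u, c) : Sym2 V)
    · rw [if_pos (by simpa using hx), List.length_cons, Nat.even_add_one, ih]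
      rw [Sym2.mem_iff] at hx
      have hne' : c ≠ u := hne.symm
      rcases hx with rfl | rfl
      · tauto
      · tauto
    · rw [if_neg (by simpa using hx), ih]
      rw [Sym2.mem_iff] at hx
      push_neg at hx
      constructor <;> intro h <;> [skip; skip] <;> tauto

/-- Lemma A: odd-degree vertices exactly {v, w} implies a path from v to w in E. -/
private lemma lemA {V : Type*} [Fintype V] [DecidableEq V]
    (G : SimpleGraph V) [DecidableRel G.Adj] :
    ∀ (n : ℕ) (E : Finset (Sym2 V)), E.card ≤ n → E ⊆ G.edgeFinset →
    ∀ v w : V, v ≠ w →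
    (∀ x : V, Odd (E.filter (fun e => x ∈ e)).card ↔ (x = v ∨ x = w)) →
    ∃ p : G.Walk v w, p.IsPath ∧ ∀ e ∈ p.edges, e ∈ E := by
  intro n
  induction n with
  | zero =>
    intro E hcard _ v w hvw hodd
    have hE : E = ∅ := Finset.card_eq_zero.mp (Nat.le_zero.mp hcard)
    have := (hodd v).mpr (Or.inl rfl)
    simp [hE] at this
  | succ n ih =>
    intro E hcard hEsub v w hvw hodd
    have hv : Odd (E.filter (fun e => v ∈ e)).card := (hodd v).mpr (Or.inl rfl)
    have hne : (E.filter (fun e => v ∈ e)).Nonempty :=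
      Finset.card_pos.mp hv.pos
    obtain ⟨e, he⟩ := hne
    have heE : e ∈ E := (Finset.mem_filter.mp he).1
    have hve : v ∈ e := (Finset.mem_filter.mp he).2
    obtain ⟨u, hu_eq⟩ : ∃ u, s(v, u) = e := ⟨Sym2.Mem.other hve, Sym2.other_spec hve⟩
    subst hu_eq
    have hadj : G.Adj v u := by
      have := hEsub heE
      rwa [SimpleGraph.mem_edgeFinset, SimpleGraph.mem_edgeSet] at this
    by_cases huw : u = w
    · subst huw
      exact ⟨SimpleGraph.Walk.cons hadj SimpleGraph.Walk.nil,
        by simp [hadj.ne], by simpa using heE⟩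
    · set E' := E.erase s(v, u) with hE'
      have key : ∀ x : V, Odd (E'.filter (fun e => x ∈ e)).card ↔ (x = u ∨ x = w) := by
        intro x
        have hd := card_filter_erase' heE (fun e => x ∈ e)
        rw [← hE'] at hd
        have ho := hodd x
        rw [Nat.odd_iff] at ho ⊢
        by_cases hx : x ∈ (s(v, u) : Sym2 V)
        · rw [if_pos hx] at hd
          rw [Sym2.mem_iff] at hx
          by_cases hxv : x = v
          · have h1 := ho.mpr (Or.inl hxv)
            constructor
            · intro h2; exfalso; omega
            · rintro (h | h)
              · exact absurd (hxv.symm.trans h) hadj.ne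
              · exact absurd (hxv.symm.trans h) hvw
          · have hxu : x = u := hx.resolve_left hxv
            have h1 : ¬ (x = v ∨ x = w) := by
              rintro (h | h)
              · exact hxv h
              · exact huw (hxu.symm.trans h)
            have h2 : (E.filter (fun e => x ∈ e)).card % 2 ≠ 1 := fun h => h1 (ho.mp h)
            refine ⟨fun _ => Or.inl hxu, fun _ => ?_⟩
            omega
        · rw [if_neg hx, add_zero] at hd
          rw [Sym2.mem_iff] at hx
          push_neg at hx
          rw [← hd, ho]
          simp [hx.1, hx.2]
      have hE'card : E'.card ≤ n := by
        have h1 : E'.card = E.card - 1 := Finset.card_erase_of_mem heE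
        have h2 : 1 ≤ E.card := Finset.card_pos.mpr ⟨_, heE⟩
        omega
      obtain ⟨p, hp, hpe⟩ := ih E' hE'card
        ((Finset.erase_subset _ _).trans hEsub) u w huw key
      refine ⟨(SimpleGraph.Walk.cons hadj p).bypass,
        SimpleGraph.Walk.bypass_isPath _, fun e he' => ?_⟩
      have hmem := SimpleGraph.Walk.edges_bypass_subset _ he'
      rw [SimpleGraph.Walk.edges_cons, List.mem_cons] at hmem
      rcases hmem with rfl | hmem
      · exact heE
      · exact Finset.mem_of_mem_erase (hpe e hmem)

/-- Lemma B: an all-even-degree edge set has nonnegative weight. -/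
private lemma lemB {V : Type*} [Fintype V] [DecidableEq V]
    (G : SimpleGraph V) [DecidableRel G.Adj] (wt : Sym2 V → ℤ)
    (hcyc : ∀ (x : V) (c : G.Walk x x), c.IsCycle →
      0 < ∑ e ∈ c.edges.toFinset, wt e) :
    ∀ (n : ℕ) (E : Finset (Sym2 V)), E.card ≤ n → E ⊆ G.edgeFinset →
    (∀ x : V, Even (E.filter (fun e => x ∈ e)).card) → 0 ≤ ∑ e ∈ E, wt e := by
  intro n
  induction n with
  | zero =>
    intro E hcard _ _
    rw [Finset.card_eq_zero.mp (Nat.le_zero.mp hcard)]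
    simp
  | succ n ih =>
    intro E hcard hEsub heven
    rcases E.eq_empty_or_nonempty with rfl | ⟨e, heE⟩
    · simp
    · revert heE
      induction e using Sym2.ind with
      | _ a b =>
      intro heE
      have hadj : G.Adj a b := by
        have := hEsub heE
        rwa [SimpleGraph.mem_edgeFinset, SimpleGraph.mem_edgeSet] at this
      set E' := E.erase s(a, b) with hE'
      have key : ∀ x : V, Odd (E'.filter (fun e => x ∈ e)).card ↔ (x = a ∨ x = b) := by
        intro x
        have hd := card_filter_erase' heE (fun e => x ∈ e)
        rw [← hE'] at hd
        have ho := heven x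
        rw [Nat.even_iff] at ho
        rw [Nat.odd_iff]
        by_cases hx : x ∈ (s(a, b) : Sym2 V)
        · rw [if_pos hx] at hd
          rw [Sym2.mem_iff] at hx
          refine ⟨fun _ => hx, fun _ => ?_⟩
          omega
        · rw [if_neg hx, add_zero] at hd
          rw [Sym2.mem_iff] at hx
          push_neg at hx
          rw [← hd, ho]
          simp [hx.1, hx.2]
      obtain ⟨p, hp, hpE'⟩ := lemA G E'.card E' le_rfl
        ((Finset.erase_subset _ _).trans hEsub) a b hadj.ne key
      have hsab : s(b, a) ∉ p.edges := by
        intro hmem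
        have := hpE' _ hmem
        rw [hE', Sym2.eq_swap] at this
        exact Finset.notMem_erase _ _ this
      have hc : (SimpleGraph.Walk.cons hadj.symm p).IsCycle :=
        SimpleGraph.Path.cons_isCycle ⟨p, hp⟩ hadj.symm hsab
      have hpos := hcyc b _ hc
      set D := p.edges.toFinset with hD
      set C := insert s(a, b) D with hC
      have hCedges : (SimpleGraph.Walk.cons hadj.symm p).edges.toFinset = C := by
        rw [SimpleGraph.Walk.edges_cons, List.toFinset_cons, Sym2.eq_swap]
      rw [hCedges] at hpos
      have hDsub : D ⊆ E' := fun e he => hpE' e (List.mem_toFinset.mp he)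
      have hCsub : C ⊆ E := by
        intro e he
        rw [hC, Finset.mem_insert] at he
        rcases he with rfl | he
        · exact heE
        · exact Finset.mem_of_mem_erase (hDsub he)
      -- even degrees of E \ C
      have heven' : ∀ x : V, Even (((E \ C).filter (fun e => x ∈ e)).card) := by
        intro x
        have hsplit := card_filter_sdiff' hCsub (fun e => x ∈ e)
        have habD : s(a, b) ∉ D := fun h => Finset.notMem_erase _ _ (hDsub h)
        have hCf : (C.filter (fun e => x ∈ e)).card
            = (if x ∈ (s(a,b) : Sym2 V) then 1 else 0) + (D.filter (fun e => x ∈ e)).card := by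
          rw [hC, Finset.filter_insert]
          split
          · rw [Finset.card_insert_of_notMem (by simp [Finset.mem_filter, habD])]
            omega
          · omega
        have hDf : (D.filter (fun e => x ∈ e)).card
            = ((p.edges.filter (fun e => x ∈ e)).length) := by
          rw [hD, ← List.toFinset_card_of_nodup (hp.isTrail.edges_nodup.filter _)]
          congr 1
          rw [List.toFinset_filter]
          simp
        have hpar := walk_parity p x
        have hEd := heven x
        rw [Nat.even_iff] at hEd ⊢
        rw [hsplit, hCf, hDf] at hEd
        by_cases hxa : x = a <;> by_cases hxb : x = b
        · exact absurd (hxa.symm.trans hxb) hadj.ne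
        · have h3 : ¬ Even ((p.edges.filter (fun e => x ∈ e)).length) := by
            rw [hpar]; tauto
          rw [Nat.not_even_iff] at h3
          rw [if_pos (by rw [Sym2.mem_iff]; tauto)] at hEd
          omega
        · have h3 : ¬ Even ((p.edges.filter (fun e => x ∈ e)).length) := by
            rw [hpar]; tauto
          rw [Nat.not_even_iff] at h3
          rw [if_pos (by rw [Sym2.mem_iff]; tauto)] at hEd
          omega
        · have h3 : Even ((p.edges.filter (fun e => x ∈ e)).length) := by
            rw [hpar]; tauto
          rw [Nat.even_iff] at h3
          rw [if_neg (by rw [Sym2.mem_iff]; tauto)] at hEd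
          omega
      have hcard' : (E \ C).card ≤ n := by
        have h1 : (E \ C).card < E.card := by
          apply Finset.card_lt_card
          constructor
          · exact Finset.sdiff_subset
          · intro hsub
            have := hsub heE
            rw [Finset.mem_sdiff] at this
            exact this.2 (Finset.mem_insert_self _ _)
        omega
      have hle := ih (E \ C) hcard' (Finset.sdiff_subset.trans hEsub) heven'
      have hsum := Finset.sum_sdiff (f := wt) hCsub
      linarith

/-- In a finite bipartite simple graph with ±1 edge weights in which
every cycle has strictly positive total weight, if `E` is a set of edges whose
odd-degree vertices are exactly two distinct vertices `v` and `w`, then there is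
a path from `v` to `w` with all edges in `E` whose total weight is at most the
total weight of `E`. -/
theorem stmt_4 {V : Type*} [Fintype V] [DecidableEq V]
    (G : SimpleGraph V) [DecidableRel G.Adj]
    (hbip : G.Colorable 2)
    (wt : Sym2 V → ℤ) (hwt : ∀ e ∈ G.edgeSet, wt e = 1 ∨ wt e = -1)
    (hcyc : ∀ (x : V) (c : G.Walk x x), c.IsCycle →
      0 < ∑ e ∈ c.edges.toFinset, wt e)
    (E : Finset (Sym2 V)) (hE : E ⊆ G.edgeFinset)
    (v w : V) (hvw : v ≠ w)
    (hodd : ∀ x : V, Odd (E.filter (fun e => x ∈ e)).card ↔ (x = v ∨ x = w)) :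
    ∃ p : G.Walk v w, p.IsPath ∧ (∀ e ∈ p.edges, e ∈ E) ∧
      ∑ e ∈ p.edges.toFinset, wt e ≤ ∑ e ∈ E, wt e := by
  obtain ⟨p, hp, hpe⟩ := lemA G E.card E le_rfl hE v w hvw hodd
  refine ⟨p, hp, hpe, ?_⟩
  set D := p.edges.toFinset with hD
  have hDsub : D ⊆ E := fun e he => hpe e (List.mem_toFinset.mp he)
  have heven' : ∀ x : V, Even (((E \ D).filter (fun e => x ∈ e)).card) := by
    intro x
    have hsplit := card_filter_sdiff' hDsub (fun e => x ∈ e)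
    have hDf : (D.filter (fun e => x ∈ e)).card
        = ((p.edges.filter (fun e => x ∈ e)).length) := by
      rw [hD, ← List.toFinset_card_of_nodup (hp.isTrail.edges_nodup.filter _)]
      congr 1
      rw [List.toFinset_filter]
      simp
    have hpar := walk_parity p x
    have hO := hodd x
    rw [Nat.odd_iff] at hO
    rw [Nat.even_iff] at hpar ⊢
    rw [hsplit, hDf] at hO
    by_cases hxv : x = v <;> by_cases hxw : x = w
    · exact absurd (hxv.symm.trans hxw) hvw
    · have h1 : ¬ ((p.edges.filter (fun e => x ∈ e)).length % 2 = 0) := by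
        rw [hpar]; tauto
      have h2 := hO.mpr (Or.inl hxv)
      omega
    · have h1 : ¬ ((p.edges.filter (fun e => x ∈ e)).length % 2 = 0) := by
        rw [hpar]; tauto
      have h2 := hO.mpr (Or.inr hxw)
      omega
    · have h1 : (p.edges.filter (fun e => x ∈ e)).length % 2 = 0 := by
        rw [hpar]; tauto
      have h2 : ¬ ((E \ D).filter (fun e => x ∈ e)).card % 2
          + (p.edges.filter (fun e => x ∈ e)).length % 2 = 1 := by
        intro h
        rcases hO.mp (by omega) with h' | h'
        · exact hxv h'
        · exact hxw h'
      omega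
  have hle := lemB G wt hcyc (E \ D).card (E \ D) le_rfl
    (Finset.sdiff_subset.trans hE) heven'
  have hsum := Finset.sum_sdiff (f := wt) hDsub
  linarith
end

section
/- Let G be a finite bipartite simple graph equipped with a weight function assigning to each edge the weight +1 or −1, and suppose that every cycle of G has strictly positive total weight. Let v_0, v_1, v_2, v_3 be four pairwise distinct vertices of G, let P be a path from v_0 to v_2 and P' a path from v_1 to v_3, and let H be the subgraph of G formed by those edges lying in exactly one of P and P' (the symmetric difference of their edge sets). If v_0 and v_1 lie in the same connected component of H, then there exist a path from v_1 to v_2 and a path from v_3 to v_0 in G the sum of whose total weights is at most w(P) + w(P'). -/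
/-!
Choose a path `Q` from `v₀` to `v₁` inside `H = P ∆ P'`. The odd-degree vertices of `P ∆ Q`
are `v₁, v₂` and those of `P' ∆ Q` are `v₃, v₀`. An edge set whose odd-degree vertices are
exactly `u ≠ v` contains a `u`–`v` path, and the rest has all degrees even, hence splits into
cycles and has nonnegative weight; so `P ∆ Q` and `P' ∆ Q` contain paths of no larger weight.
Since every edge of `Q` lies in exactly one of `P`, `P'`, `w(P ∆ Q) + w(P' ∆ Q) = w(P) + w(P')`.
-/

open Finset
open scoped symmDiff

theorem Finset.sum_symmDiff_add_two_nsmul_sum_inter {α M : Type*} [DecidableEq α]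
    [AddCommMonoid M] (A B : Finset α) (f : α → M) :
    ∑ x ∈ A ∆ B, f x + 2 • ∑ x ∈ A ∩ B, f x = ∑ x ∈ A, f x + ∑ x ∈ B, f x := by
  rw [← sum_sdiff (f := f) (inter_subset_left : A ∩ B ⊆ A),
    ← sum_sdiff (f := f) (inter_subset_right : A ∩ B ⊆ B), sdiff_inter_self_left,
    sdiff_inter_self_right, Finset.symmDiff_def, sum_union disjoint_sdiff_sdiff, two_nsmul]
  abel

theorem Finset.sum_symmDiff_add_sum_symmDiff {α M : Type*} [DecidableEq α] [AddCommGroup M]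
    {A B C : Finset α} (hC : C ⊆ A ∆ B) (f : α → M) :
    ∑ x ∈ A ∆ C, f x + ∑ x ∈ B ∆ C, f x = ∑ x ∈ A, f x + ∑ x ∈ B, f x := by
  have hBC : B ∩ C = C \ A := by
    ext x
    have := @hC x
    simp only [mem_inter, mem_sdiff, mem_symmDiff] at this ⊢
    tauto
  have hsplit : ∑ x ∈ A ∩ C, f x + ∑ x ∈ B ∩ C, f x = ∑ x ∈ C, f x := by
    rw [inter_comm, hBC, sum_inter_add_sum_sdiff]
  have hA := sum_symmDiff_add_two_nsmul_sum_inter A C f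
  have hB := sum_symmDiff_add_two_nsmul_sum_inter B C f
  rw [← eq_sub_iff_add_eq] at hA hB
  rw [hA, hB, ← hsplit]
  abel

theorem Finset.coe_symmDiff_subset {α : Type*} [DecidableEq α] {A B : Finset α} {s : Set α}
    (hA : ↑A ⊆ s) (hB : ↑B ⊆ s) : ↑(A ∆ B) ⊆ s := by
  rw [coe_symmDiff]
  exact Set.symmDiff_subset_union.trans (Set.union_subset hA hB)

theorem Set.pair_symmDiff_pair {α : Type*} {a b c : α} (hab : a ≠ b) (hac : a ≠ c)
    (hbc : b ≠ c) : ({a, b} : Set α) ∆ {a, c} = {b, c} := by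
  ext x
  simp only [Set.mem_symmDiff, Set.mem_insert_iff, Set.mem_singleton_iff]
  grind

section OddVertices

variable {V : Type*} [DecidableEq V]

def oddVertices (S : Finset (Sym2 V)) : Set V := {y | Odd #{e ∈ S | y ∈ e}}

theorem oddVertices_symmDiff (A B : Finset (Sym2 V)) :
    oddVertices (A ∆ B) = oddVertices A ∆ oddVertices B := by
  ext y
  have h := sum_symmDiff_add_two_nsmul_sum_inter A B fun e => if y ∈ e then 1 else 0
  simp only [← card_filter, smul_eq_mul] at h
  simp only [oddVertices, Set.mem_symmDiff, Set.mem_ofPred_eq, Nat.odd_iff]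
  omega

theorem oddVertices_sdiff {S T : Finset (Sym2 V)} (h : T ⊆ S) :
    oddVertices (S \ T) = oddVertices S ∆ oddVertices T := by
  rw [← oddVertices_symmDiff, symmDiff_of_ge h]

theorem oddVertices_singleton (a b : V) : oddVertices {s(a, b)} = {a, b} := by
  ext y
  simp only [oddVertices, filter_singleton, Set.mem_ofPred_eq, Set.mem_insert_iff,
    Set.mem_singleton_iff]
  split_ifs with h <;> simp_all

theorem exists_mk_mem_of_mem_oddVertices {S : Finset (Sym2 V)} {y : V}
    (hy : y ∈ oddVertices S) : ∃ z, s(y, z) ∈ S := by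
  obtain ⟨e, he⟩ := card_pos.mp hy.pos
  rw [mem_filter] at he
  obtain ⟨z, rfl⟩ := Sym2.mem_iff_exists.mp he.2
  exact ⟨z, he.1⟩

namespace SimpleGraph

variable {G : SimpleGraph V}

theorem Walk.coe_edges_toFinset_subset {u v : V} (p : G.Walk u v) :
    ↑p.edges.toFinset ⊆ G.edgeSet :=
  fun _ he => p.edges_subset_edgeSet (List.mem_toFinset.mp he)

theorem Walk.IsTrail.oddVertices_edges {u v : V} {p : G.Walk u v} (hp : p.IsTrail)
    (huv : u ≠ v) : oddVertices p.edges.toFinset = {u, v} := by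
  ext y
  have h := hp.even_countP_edges_iff y
  rw [List.countP_eq_length_filter, ← List.toFinset_card_of_nodup (hp.edges_nodup.filter _),
    List.toFinset_filter] at h
  simp only [decide_eq_true_eq] at h
  simp only [oddVertices, Set.mem_ofPred_eq, Set.mem_insert_iff, Set.mem_singleton_iff,
    ← Nat.not_even_iff_odd, h]
  tauto

theorem exists_isPath_of_oddVertices_eq_pair {S : Finset (Sym2 V)} (hS : ↑S ⊆ G.edgeSet)
    {u v : V} (huv : u ≠ v) (hodd : oddVertices S = {u, v}) :
    ∃ p : G.Walk u v, p.IsPath ∧ p.edges.toFinset ⊆ S := by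
  induction S using Finset.strongInduction generalizing u with
  | H S ih =>
  obtain ⟨z, hz⟩ := exists_mk_mem_of_mem_oddVertices (hodd ▸ Set.mem_insert u {v})
  have hadj : G.Adj u z := hS hz
  rcases eq_or_ne z v with rfl | hzv
  · refine ⟨hadj.toWalk, by simpa using huv, ?_⟩
    simpa using hz
  have hsub : {s(u, z)} ⊆ S := singleton_subset_iff.mpr hz
  have hodd' : oddVertices (S \ {s(u, z)}) = {z, v} := by
    rw [oddVertices_sdiff hsub, hodd, oddVertices_singleton,
      Set.pair_symmDiff_pair huv hadj.ne hzv.symm, Set.pair_comm]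
  obtain ⟨q, hq, hqS⟩ := ih _ (sdiff_ssubset hsub (singleton_nonempty _))
    ((coe_subset.mpr sdiff_subset).trans hS) hzv hodd'
  have hqS : q.edges.toFinset ⊆ S := hqS.trans sdiff_subset
  by_cases hu : u ∈ q.support
  · refine ⟨q.dropUntil u hu, hq.dropUntil hu, subset_trans ?_ hqS⟩
    intro e he
    exact List.mem_toFinset.mpr (q.edges_dropUntil_subset_edges hu (List.mem_toFinset.mp he))
  · refine ⟨q.cons hadj, hq.cons hu, ?_⟩
    simpa [insert_subset_iff] using ⟨hz, hqS⟩

theorem sum_nonneg_of_oddVertices_eq_empty {M : Type*} [AddCommMonoid M] [PartialOrder M]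
    [IsOrderedAddMonoid M] {wt : Sym2 V → M}
    (hcyc : ∀ (x : V) (c : G.Walk x x), c.IsCycle → 0 ≤ ∑ e ∈ c.edges.toFinset, wt e)
    {S : Finset (Sym2 V)} (hS : ↑S ⊆ G.edgeSet) (hodd : oddVertices S = ∅) :
    0 ≤ ∑ e ∈ S, wt e := by
  induction S using Finset.strongInduction with
  | H S ih =>
  rcases S.eq_empty_or_nonempty with rfl | ⟨e, he⟩
  · simp
  induction e using Sym2.ind with | _ a b =>
  -- Removing an edge `ab` makes exactly `a` and `b` odd; an `a`–`b` path in what is left closes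
  -- up with `ab` to a cycle, and what remains after the cycle is again even.
  have hadj : G.Adj a b := hS he
  have hsub : {s(a, b)} ⊆ S := singleton_subset_iff.mpr he
  obtain ⟨p, hp, hpS⟩ := exists_isPath_of_oddVertices_eq_pair (G := G)
    (S := S \ {s(a, b)}) ((coe_subset.mpr sdiff_subset).trans hS) hadj.ne
    (by rw [oddVertices_sdiff hsub, hodd, oddVertices_singleton, ← Set.bot_eq_empty,
      bot_symmDiff])
  have hab : s(a, b) ∉ p.edges.toFinset := fun h => by simpa using hpS h
  have hcycle := hcyc b (p.cons hadj.symm) ((Walk.cons_isCycle_iff p hadj.symm).mpr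
    ⟨hp, by simpa [Sym2.eq_swap] using hab⟩)
  rw [Walk.edges_cons, List.toFinset_cons, Sym2.eq_swap, sum_insert hab] at hcycle
  have hrest := ih ((S \ {s(a, b)}) \ p.edges.toFinset)
    (sdiff_subset.trans_ssubset (sdiff_ssubset hsub (singleton_nonempty _)))
    ((coe_subset.mpr (sdiff_subset.trans sdiff_subset)).trans hS)
    (by rw [oddVertices_sdiff hpS, oddVertices_sdiff hsub, hodd, oddVertices_singleton,
      hp.isTrail.oddVertices_edges hadj.ne, ← Set.bot_eq_empty, bot_symmDiff, symmDiff_self])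
  rw [← sum_sdiff hsub, ← sum_sdiff hpS, sum_singleton, add_assoc,
    add_comm (∑ e ∈ p.edges.toFinset, wt e)]
  exact add_nonneg hrest hcycle

theorem exists_isPath_sum_le_of_oddVertices_eq_pair {M : Type*} [AddCommMonoid M]
    [PartialOrder M] [IsOrderedAddMonoid M] {wt : Sym2 V → M}
    (hcyc : ∀ (x : V) (c : G.Walk x x), c.IsCycle → 0 ≤ ∑ e ∈ c.edges.toFinset, wt e)
    {S : Finset (Sym2 V)} (hS : ↑S ⊆ G.edgeSet) {u v : V} (huv : u ≠ v)
    (hodd : oddVertices S = {u, v}) :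
    ∃ p : G.Walk u v, p.IsPath ∧ ∑ e ∈ p.edges.toFinset, wt e ≤ ∑ e ∈ S, wt e := by
  obtain ⟨p, hp, hpS⟩ := exists_isPath_of_oddVertices_eq_pair hS huv hodd
  have hrest := sum_nonneg_of_oddVertices_eq_empty hcyc ((coe_subset.mpr sdiff_subset).trans hS)
    (by rw [oddVertices_sdiff hpS, hodd, hp.isTrail.oddVertices_edges huv, symmDiff_self,
      Set.bot_eq_empty])
  refine ⟨p, hp, ?_⟩
  rw [← sum_sdiff hpS]
  exact le_add_of_nonneg_left hrest

theorem exists_isPath_of_reachable_fromEdgeSet {S : Finset (Sym2 V)} (hS : ↑S ⊆ G.edgeSet)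
    {u v : V} (h : (fromEdgeSet (S : Set (Sym2 V))).Reachable u v) :
    ∃ p : G.Walk u v, p.IsPath ∧ p.edges.toFinset ⊆ S := by
  obtain ⟨q⟩ := h
  have hle : fromEdgeSet (S : Set (Sym2 V)) ≤ G :=
    (fromEdgeSet_le G).mpr (Set.sdiff_subset.trans hS)
  refine ⟨q.bypass.mapLe hle, q.bypass_isPath.mapLe hle, fun e he => ?_⟩
  rw [List.mem_toFinset, Walk.edges_mapLe_eq_edges] at he
  exact (edgeSet_fromEdgeSet _ ▸ q.bypass.edges_subset_edgeSet he).1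

end SimpleGraph

end OddVertices

open SimpleGraph in
theorem stmt_5_general {V : Type*} [DecidableEq V]
    (G : SimpleGraph V)
    (wt : Sym2 V → ℤ)
    (hcyc : ∀ (x : V) (c : G.Walk x x), c.IsCycle →
      0 < ∑ e ∈ c.edges.toFinset, wt e)
    (v₀ v₁ v₂ v₃ : V)
    (h01 : v₀ ≠ v₁) (h02 : v₀ ≠ v₂) (h03 : v₀ ≠ v₃)
    (h12 : v₁ ≠ v₂) (h13 : v₁ ≠ v₃)
    (P : G.Walk v₀ v₂) (hP : P.IsPath)
    (P' : G.Walk v₁ v₃) (hP' : P'.IsPath)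
    (hconn : (SimpleGraph.fromEdgeSet
        (↑(symmDiff P.edges.toFinset P'.edges.toFinset) : Set (Sym2 V))).Reachable v₀ v₁) :
    ∃ (P12 : G.Walk v₁ v₂) (P30 : G.Walk v₃ v₀),
      P12.IsPath ∧ P30.IsPath ∧
      ∑ e ∈ P12.edges.toFinset, wt e + ∑ e ∈ P30.edges.toFinset, wt e ≤
        ∑ e ∈ P.edges.toFinset, wt e + ∑ e ∈ P'.edges.toFinset, wt e := by
  have hcyc' x c hc := (hcyc x c hc).le
  have hAB := coe_symmDiff_subset P.coe_edges_toFinset_subset P'.coe_edges_toFinset_subset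
  obtain ⟨Q, hQ, hQAB⟩ := exists_isPath_of_reachable_fromEdgeSet hAB hconn
  obtain ⟨P12, hP12, hw12⟩ := exists_isPath_sum_le_of_oddVertices_eq_pair hcyc'
    (coe_symmDiff_subset P.coe_edges_toFinset_subset Q.coe_edges_toFinset_subset) h12
    (by rw [oddVertices_symmDiff, hP.isTrail.oddVertices_edges h02,
      hQ.isTrail.oddVertices_edges h01, Set.pair_symmDiff_pair h02 h01 h12.symm, Set.pair_comm])
  obtain ⟨P30, hP30, hw30⟩ := exists_isPath_sum_le_of_oddVertices_eq_pair hcyc'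
    (coe_symmDiff_subset P'.coe_edges_toFinset_subset Q.coe_edges_toFinset_subset) h03.symm
    (by rw [oddVertices_symmDiff, hP'.isTrail.oddVertices_edges h13,
      hQ.isTrail.oddVertices_edges h01, Set.pair_comm v₀,
      Set.pair_symmDiff_pair h13 h01.symm h03.symm])
  have hsum := sum_symmDiff_add_sum_symmDiff hQAB wt
  exact ⟨P12, P30, hP12, hP30, by linarith⟩

/-- In a finite bipartite simple graph with ±1 edge weights in which
every cycle has strictly positive total weight, let `v₀, v₁, v₂, v₃` be pairwise
distinct vertices, `P` a path from `v₀` to `v₂`, `P'` a path from `v₁` to `v₃`,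
and `H` the symmetric difference of their edge sets. If `v₀` and `v₁` lie in the
same connected component of the subgraph formed by `H`, then there are a path
from `v₁` to `v₂` and a path from `v₃` to `v₀` whose total weights sum to at
most `w(P) + w(P')`. -/
theorem stmt_5 {V : Type*} [Fintype V] [DecidableEq V]
    (G : SimpleGraph V) [DecidableRel G.Adj]
    (hbip : G.Colorable 2)
    (wt : Sym2 V → ℤ) (hwt : ∀ e ∈ G.edgeSet, wt e = 1 ∨ wt e = -1)
    (hcyc : ∀ (x : V) (c : G.Walk x x), c.IsCycle →
      0 < ∑ e ∈ c.edges.toFinset, wt e)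
    (v₀ v₁ v₂ v₃ : V)
    (h01 : v₀ ≠ v₁) (h02 : v₀ ≠ v₂) (h03 : v₀ ≠ v₃)
    (h12 : v₁ ≠ v₂) (h13 : v₁ ≠ v₃) (h23 : v₂ ≠ v₃)
    (P : G.Walk v₀ v₂) (hP : P.IsPath)
    (P' : G.Walk v₁ v₃) (hP' : P'.IsPath)
    (hconn : (SimpleGraph.fromEdgeSet
        (↑(symmDiff P.edges.toFinset P'.edges.toFinset) : Set (Sym2 V))).Reachable v₀ v₁) :
    ∃ (P12 : G.Walk v₁ v₂) (P30 : G.Walk v₃ v₀),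
      P12.IsPath ∧ P30.IsPath ∧
      ∑ e ∈ P12.edges.toFinset, wt e + ∑ e ∈ P30.edges.toFinset, wt e ≤
        ∑ e ∈ P.edges.toFinset, wt e + ∑ e ∈ P'.edges.toFinset, wt e :=
  stmt_5_general G wt hcyc v₀ v₁ v₂ v₃ h01 h02 h03 h12 h13 P hP P' hP' hconn
end

section
/- Let G be a finite bipartite simple graph equipped with a weight function assigning to each edge the weight +1 or −1, and suppose that every cycle of G has strictly positive total weight. Then every nonempty set E of edges of G such that every vertex has even degree in the subgraph formed by E has total weight w(E) at least 2. -/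
open Finset

open SimpleGraph in
private lemma exists_cycle_aux {V : Type*} [Fintype V] [DecidableEq V]
    (H : SimpleGraph V) [DecidableRel H.Adj]
    (hdeg : ∀ v : V, H.degree v ≠ 1) {a b : V} (hab : H.Adj a b) :
    ∃ (x : V) (c : H.Walk x x), c.IsCycle := by
  classical
  set P : ℕ → Prop := fun n => ∃ (u v : V) (p : H.Walk u v), p.IsPath ∧ p.length = n with hPdef
  have hP1 : P 1 := by
    rw [hPdef]
    exact ⟨a, b, Walk.cons hab Walk.nil, by simp [hab.ne], by simp⟩
  have hcard : 1 ≤ Fintype.card V := Fintype.card_pos_iff.mpr ⟨a⟩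
  set n := Nat.findGreatest P (Fintype.card V) with hn
  have hn1 : 1 ≤ n := Nat.le_findGreatest hcard hP1
  have hPn : P n := Nat.findGreatest_of_ne_zero hn.symm (by omega)
  rw [hPdef] at hPn
  obtain ⟨u, v, p, hp, hlen⟩ := hPn
  cases p with
  | nil => simp at hlen; omega
  | @cons _ u' _ h p' =>
    rw [Walk.cons_isPath_iff] at hp
    have hu' : u' ∈ H.neighborFinset u := by simpa using h
    have h2 : 1 < (H.neighborFinset u).card := by
      have hpos : 0 < (H.neighborFinset u).card := Finset.card_pos.mpr ⟨u', hu'⟩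
      have hne1 := hdeg u
      rw [← card_neighborFinset_eq_degree] at hne1
      omega
    obtain ⟨w, hw, hwne⟩ := Finset.exists_mem_ne h2 u'
    have huw : H.Adj u w := by simpa using hw
    by_cases hws : w ∈ (Walk.cons h p').support
    · -- w is on the path: we get a cycle
      have hq : (((Walk.cons h p').takeUntil w hws)).IsPath :=
        ((Walk.cons_isPath_iff _ _).mpr hp).takeUntil hws
      refine ⟨w, Walk.cons huw.symm ((Walk.cons h p').takeUntil w hws), ?_⟩
      rw [SimpleGraph.Walk.cons_isCycle_iff]
      refine ⟨hq, fun hmem => ?_⟩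
      have hmem' : s(w, u) ∈ (Walk.cons h p').edges :=
        Walk.edges_takeUntil_subset _ hws hmem
      rw [Walk.edges_cons, List.mem_cons] at hmem'
      rcases hmem' with heq | hmem'
      · rw [Sym2.eq_iff] at heq
        rcases heq with ⟨rfl, rfl⟩ | ⟨h1, h2⟩
        · exact huw.ne rfl
        · exact hwne h1
      · exact hp.2 (Walk.snd_mem_support_of_mem_edges p' hmem')
    · -- w is not on the path: extend the path, contradicting maximality
      exfalso
      have hq : (Walk.cons huw.symm (Walk.cons h p')).IsPath :=
        (Walk.cons_isPath_iff _ _).mpr ⟨(Walk.cons_isPath_iff _ _).mpr hp, hws⟩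
      have hlt : (Walk.cons huw.symm (Walk.cons h p')).length < Fintype.card V :=
        hq.length_lt
      have hlen' : (Walk.cons huw.symm (Walk.cons h p')).length = n + 1 := by
        simp only [Walk.length_cons] at hlen ⊢; omega
      refine Nat.findGreatest_is_greatest (n := Fintype.card V) (P := P)
        (by omega : n < n + 1) (by omega) ?_
      rw [hPdef]
      exact ⟨_, _, _, hq, hlen'⟩

open SimpleGraph in
private lemma main_aux {V : Type*} [Fintype V] [DecidableEq V]
    (G : SimpleGraph V) [DecidableRel G.Adj]
    (hbip : G.Colorable 2)
    (wt : Sym2 V → ℤ) (hwt : ∀ e ∈ G.edgeSet, wt e = 1 ∨ wt e = -1)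
    (hcyc : ∀ (x : V) (c : G.Walk x x), c.IsCycle →
      0 < ∑ e ∈ c.edges.toFinset, wt e) :
    ∀ (n : ℕ) (E : Finset (Sym2 V)), E.card ≤ n → E ⊆ G.edgeFinset → E.Nonempty →
      (∀ x : V, Even ((E.filter (fun e => x ∈ e)).card)) → 2 ≤ ∑ e ∈ E, wt e := by
  classical
  intro n
  induction n with
  | zero =>
    intro E hcard _ hne _
    obtain ⟨e, he⟩ := hne
    have := Finset.card_pos.mpr ⟨e, he⟩
    omega
  | succ n ih =>
    intro E hcard hE hne heven
    -- the graph formed by E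
    set H : SimpleGraph V := SimpleGraph.fromEdgeSet ↑E with hH
    have hEsub : (↑E : Set (Sym2 V)) ⊆ G.edgeSet := by
      intro e he
      exact Set.mem_toFinset.mp (hE he)
    have hHedge : H.edgeSet = ↑E := by
      rw [hH, edgeSet_fromEdgeSet]
      ext e
      simp only [Set.mem_diff, Set.mem_setOf_eq, Finset.mem_coe]
      exact ⟨fun h => h.1, fun h => ⟨h, G.not_isDiag_of_mem_edgeSet (hEsub h)⟩⟩
    have hHfin : H.edgeFinset = E := by
      rw [SimpleGraph.edgeFinset, Set.toFinset_congr hHedge, Finset.toFinset_coe]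
    have hdeg : ∀ x : V, H.degree x ≠ 1 := by
      intro x
      have hdx : H.degree x = (E.filter (fun e => x ∈ e)).card := by
        rw [← card_incidenceFinset_eq_degree, incidenceFinset_eq_filter, hHfin]
      rw [hdx]
      intro h1
      have h2 := heven x
      rw [h1] at h2
      simp at h2
    -- find an edge of H
    obtain ⟨e, he⟩ := hne
    have hHadj : ∃ a b : V, H.Adj a b := by
      induction e using Sym2.ind with
      | _ a b =>
        refine ⟨a, b, (SimpleGraph.fromEdgeSet_adj _).mpr ⟨he, ?_⟩⟩
        intro hab
        exact G.not_isDiag_of_mem_edgeSet (hEsub he) (by simp [hab])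
    obtain ⟨a, b, hab⟩ := hHadj
    obtain ⟨x, c, hc⟩ := exists_cycle_aux H hdeg hab
    -- transfer the cycle to G
    have hsub : ∀ e' ∈ c.edges, e' ∈ G.edgeSet := by
      intro e' he'
      have h1 : e' ∈ H.edgeSet := c.edges_subset_edgeSet he'
      rw [hHedge] at h1
      exact hEsub h1
    set ct : G.Walk x x := c.transfer G hsub with hct_def
    have hct : ct.IsCycle := hc.transfer hsub
    have htr : ct.IsTrail := hct.isCircuit.isTrail
    have hedges : ct.edges = c.edges := Walk.edges_transfer c hsub
    set F : Finset (Sym2 V) := ct.edges.toFinset with hF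
    have hFE : F ⊆ E := by
      intro e' he'
      rw [hF, List.mem_toFinset, hedges] at he'
      have h1 : e' ∈ H.edgeSet := c.edges_subset_edgeSet he'
      rw [hHedge] at h1
      exact h1
    have hpos : 0 < ∑ e' ∈ F, wt e' := hcyc x ct hct
    -- parity of the cycle length
    obtain ⟨C⟩ := hbip
    have hevenlen : Even ct.length :=
      ((G.recolorOfEquiv finTwoEquiv C).even_length_iff_congr ct).mpr Iff.rfl
    have hnodup : ct.edges.Nodup := htr.edges_nodup
    have hFcard : F.card = ct.length := by
      rw [hF, List.toFinset_card_of_nodup hnodup, Walk.length_edges]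
    have hFcard_even : Even F.card := by rw [hFcard]; exact hevenlen
    -- each vertex has even degree in F
    have hFdeg : ∀ y : V, Even ((F.filter (fun e' => y ∈ e')).card) := by
      intro y
      have hcount : Even (ct.edges.countP (fun e' => y ∈ e')) :=
        (htr.even_countP_edges_iff y).mpr (fun h => absurd rfl h)
      have heq1 : (ct.edges.filter (fun e' => decide (y ∈ e'))).toFinset
          = F.filter (fun e' => y ∈ e') := by
        ext e'
        simp [hF, List.mem_filter, and_comm]
      have heq2 : (F.filter (fun e' => y ∈ e')).card
          = ct.edges.countP (fun e' => decide (y ∈ e')) := by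
        rw [← heq1, List.toFinset_card_of_nodup (hnodup.filter _),
          List.countP_eq_length_filter]
      rw [heq2]
      exact hcount
    -- sum over F is even, hence at least 2
    have hFsum_even : Even (∑ e' ∈ F, wt e') := by
      have h2 : Even (∑ e' ∈ F, (wt e' + 1)) := by
        apply Finset.even_sum
        intro e' he'
        rcases hwt e' (hEsub (hFE he')) with h | h <;> rw [h] <;> decide
      have h3 : ∑ e' ∈ F, wt e' = (∑ e' ∈ F, (wt e' + 1)) - F.card := by
        rw [Finset.sum_add_distrib, Finset.sum_const, nsmul_eq_mul, mul_one]
        ring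
      rw [h3]
      exact h2.sub ((Int.even_coe_nat _).mpr hFcard_even)
    have hF2 : 2 ≤ ∑ e' ∈ F, wt e' := by
      obtain ⟨k, hk⟩ := hFsum_even
      omega
    have hFne : F.Nonempty := by
      rw [← Finset.card_pos, hFcard]
      have := hct.three_le_length
      omega
    have hsplit : ∑ e' ∈ E \ F, wt e' + ∑ e' ∈ F, wt e' = ∑ e' ∈ E, wt e' :=
      Finset.sum_sdiff hFE
    rcases Finset.eq_empty_or_nonempty (E \ F) with hE' | hE'
    · have hEF : E = F :=
        Finset.Subset.antisymm (Finset.sdiff_eq_empty_iff_subset.mp hE') hFE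
      rw [hEF]
      exact hF2
    · -- apply the inductive hypothesis to E \ F
      have hcard' : (E \ F).card ≤ n := by
        rw [Finset.card_sdiff_of_subset hFE]
        have h1 : 1 ≤ F.card := Finset.card_pos.mpr hFne
        have h2 : F.card ≤ E.card := Finset.card_le_card hFE
        omega
      have hsub' : E \ F ⊆ G.edgeFinset := fun e' he' => hE (Finset.sdiff_subset he')
      have heven' : ∀ y : V, Even (((E \ F).filter (fun e' => y ∈ e')).card) := by
        intro y
        have heq : (E \ F).filter (fun e' => y ∈ e')
            = E.filter (fun e' => y ∈ e') \ F.filter (fun e' => y ∈ e') := by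
          ext e'
          simp only [Finset.mem_filter, Finset.mem_sdiff]
          tauto
        rw [heq, Finset.card_sdiff_of_subset (Finset.filter_subset_filter _ hFE)]
        rw [Nat.even_sub (Finset.card_le_card (Finset.filter_subset_filter _ hFE))]
        constructor <;> intro <;> [exact hFdeg y; exact heven y]
      have hrec := ih (E \ F) hcard' hsub' hE' heven'
      linarith

/-- In a finite bipartite simple graph with ±1 edge weights in which
every cycle has strictly positive total weight, every nonempty set `E` of edges
in which every vertex has even degree has total weight at least 2. -/
theorem stmt_6 {V : Type*} [Fintype V] [DecidableEq V]
    (G : SimpleGraph V) [DecidableRel G.Adj]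
    (hbip : G.Colorable 2)
    (wt : Sym2 V → ℤ) (hwt : ∀ e ∈ G.edgeSet, wt e = 1 ∨ wt e = -1)
    (hcyc : ∀ (x : V) (c : G.Walk x x), c.IsCycle →
      0 < ∑ e ∈ c.edges.toFinset, wt e)
    (E : Finset (Sym2 V)) (hE : E ⊆ G.edgeFinset) (hne : E.Nonempty)
    (heven : ∀ x : V, Even (E.filter (fun e => x ∈ e)).card) :
    2 ≤ ∑ e ∈ E, wt e :=
  main_aux G hbip wt hwt hcyc E.card E le_rfl hE hne heven
end
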